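/- For every ρ₀ > 0, the function u(r) := (1/2)·(ρ₀⁴ − (r² − (√3/2)ρ₀²)²)^{1/2}, defined on the interval 0 < r < ((2+√3)/2)^{1/2}ρ₀, is twice differentiable with u'(r) = −r(r² − (√3/2)ρ₀²)/(ρ₀⁴ − (r² − (√3/2)ρ₀²)²)^{1/2}, and satisfies the rotationally symmetric vanishing-E₁ equation (1/3)r⁴u''(r)² − ((4/3)r·u'(r)³ + 2r³u'(r))·u''(r) + (1/3)u'(r)⁶/r² + u'(r)⁴ − r⁴ = 0; moreover u(r) − u(0⁺) = −(1/4)ρ₀² + (1/2)(ρ₀⁴ − (r² − (√3/2)ρ₀²)²)^{1/2} where u(0⁺) := lim_{r→0⁺} u(r) = (1/4)ρ₀². -/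

import Mathlib

/-! Write `s = (√3/2)ρ₀²`, `a = r² − s` and `w = √(ρ₀⁴ − a²) = 2u`. Then `u' = −ra/w` and
`u'' = Q/w³` with `Q = −(3r² − s)w² − 2r²a²`, and `3w⁶/r⁴` times the vanishing-E₁ expression is
`(Q + 2a³ + 3aw²)² − 3(a² + w²)³`. Since `Q + 2a³ + 3aw² = −2s(a² + w²)` and `a² + w² = ρ₀⁴`,
this vanishes precisely because `4s² = 3ρ₀⁴`. -/

noncomputable def vanishingE1 (r p q : ℝ) : ℝ :=
  (1 / 3) * r ^ 4 * q ^ 2 - ((4 / 3) * r * p ^ 3 + 2 * r ^ 3 * p) * q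
    + (1 / 3) * p ^ 6 / r ^ 2 + p ^ 4 - r ^ 4

theorem vanishingE1_eq_zero_of_sq_eq {r a w Q : ℝ} (hw : w ≠ 0)
    (h : (Q + 2 * a ^ 3 + 3 * a * w ^ 2) ^ 2 = 3 * (a ^ 2 + w ^ 2) ^ 3) :
    vanishingE1 r (-(r * a) / w) (Q / w ^ 3) = 0 := by
  unfold vanishingE1
  field_simp
  linear_combination r ^ 4 * h

namespace HeisenbergSphere

variable {c s r : ℝ}

theorem hasDerivAt_radicand :
    HasDerivAt (fun x => c - (x ^ 2 - s) ^ 2) (-(4 * r * (r ^ 2 - s))) r := by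
  refine ((((hasDerivAt_pow 2 r).sub_const s).pow 2).const_sub c).congr_deriv ?_
  push_cast; ring

theorem hasDerivAt_half_sqrt_radicand (h : 0 < c - (r ^ 2 - s) ^ 2) :
    HasDerivAt (fun x => 1 / 2 * √(c - (x ^ 2 - s) ^ 2))
      (-(r * (r ^ 2 - s)) / √(c - (r ^ 2 - s) ^ 2)) r := by
  refine ((hasDerivAt_radicand.sqrt h.ne').const_mul (1 / 2 : ℝ)).congr_deriv ?_
  have hw := (Real.sqrt_pos.mpr h).ne'
  field_simp
  ring

theorem hasDerivAt_neg_mul_div_sqrt_radicand (h : 0 < c - (r ^ 2 - s) ^ 2) :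
    HasDerivAt (fun x => -(x * (x ^ 2 - s)) / √(c - (x ^ 2 - s) ^ 2))
      ((-(3 * r ^ 2 - s) * (c - (r ^ 2 - s) ^ 2) - 2 * r ^ 2 * (r ^ 2 - s) ^ 2)
        / √(c - (r ^ 2 - s) ^ 2) ^ 3) r := by
  have hw := (Real.sqrt_pos.mpr h).ne'
  have hnum : HasDerivAt (fun x : ℝ => -(x * (x ^ 2 - s))) (-(3 * r ^ 2 - s)) r := by
    refine ((hasDerivAt_id' r).mul ((hasDerivAt_pow 2 r).sub_const s)).neg.congr_deriv ?_
    push_cast; ring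
  refine (hnum.div (hasDerivAt_radicand.sqrt h.ne') hw).congr_deriv ?_
  field_simp
  rw [Real.sq_sqrt h.le]
  ring

theorem vanishingE1_half_sqrt_radicand (h : 0 < c - (r ^ 2 - s) ^ 2)
    (hs : 4 * s ^ 2 = 3 * c) :
    vanishingE1 r (-(r * (r ^ 2 - s)) / √(c - (r ^ 2 - s) ^ 2))
      ((-(3 * r ^ 2 - s) * (c - (r ^ 2 - s) ^ 2) - 2 * r ^ 2 * (r ^ 2 - s) ^ 2)
        / √(c - (r ^ 2 - s) ^ 2) ^ 3) = 0 := by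
  apply vanishingE1_eq_zero_of_sq_eq (Real.sqrt_pos.mpr h).ne'
  rw [Real.sq_sqrt h.le]
  linear_combination c ^ 2 * hs

theorem radicand_pos {ρ : ℝ} (hr : 0 < r) (hrR : r < √((2 + √3) / 2) * ρ) :
    0 < ρ ^ 4 - (r ^ 2 - √3 / 2 * ρ ^ 2) ^ 2 := by
  have h3 : √3 ^ 2 = 3 := Real.sq_sqrt (by norm_num)
  have h3lt : √3 < 2 := by nlinarith [Real.sqrt_nonneg 3]
  have hr2 : r ^ 2 < (2 + √3) / 2 * ρ ^ 2 := by
    calc r ^ 2 < (√((2 + √3) / 2) * ρ) ^ 2 := by gcongr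
      _ = (2 + √3) / 2 * ρ ^ 2 := by rw [mul_pow, Real.sq_sqrt (by positivity)]
  have hupper : r ^ 2 - √3 / 2 * ρ ^ 2 < ρ ^ 2 := by linarith
  have hlower : -ρ ^ 2 < r ^ 2 - √3 / 2 * ρ ^ 2 := by nlinarith
  nlinarith

end HeisenbergSphere

open Filter HeisenbergSphere

theorem stmt_19 (ρ₀ : ℝ) (R : ℝ)
    (hR : R = Real.sqrt ((2 + Real.sqrt 3) / 2) * ρ₀)
    (u : ℝ → ℝ)
    (hu : ∀ r, u r =
      (1 / 2) * Real.sqrt (ρ₀ ^ 4 - (r ^ 2 - (Real.sqrt 3 / 2) * ρ₀ ^ 2) ^ 2)) :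
    (∀ r ∈ Set.Ioo (0 : ℝ) R,
      HasDerivAt u (-(r * (r ^ 2 - (Real.sqrt 3 / 2) * ρ₀ ^ 2))
        / Real.sqrt (ρ₀ ^ 4 - (r ^ 2 - (Real.sqrt 3 / 2) * ρ₀ ^ 2) ^ 2)) r)
    ∧ (∀ r ∈ Set.Ioo (0 : ℝ) R, DifferentiableAt ℝ (deriv u) r)
    ∧ (∀ r ∈ Set.Ioo (0 : ℝ) R,
        (1 / 3) * r ^ 4 * (deriv (deriv u) r) ^ 2
          - ((4 / 3) * r * (deriv u r) ^ 3 + 2 * r ^ 3 * deriv u r) * deriv (deriv u) r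
          + (1 / 3) * (deriv u r) ^ 6 / r ^ 2 + (deriv u r) ^ 4 - r ^ 4 = 0)
    ∧ Tendsto u (nhdsWithin 0 (Set.Ioi 0)) (nhds ((1 / 4) * ρ₀ ^ 2))
    ∧ (∀ r ∈ Set.Ioo (0 : ℝ) R,
        u r - (1 / 4) * ρ₀ ^ 2 = -(1 / 4) * ρ₀ ^ 2
          + (1 / 2) * Real.sqrt (ρ₀ ^ 4 - (r ^ 2 - (Real.sqrt 3 / 2) * ρ₀ ^ 2) ^ 2)) := by
  obtain rfl : u = fun r => 1 / 2 * √(ρ₀ ^ 4 - (r ^ 2 - √3 / 2 * ρ₀ ^ 2) ^ 2) := funext hu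
  subst hR
  have hpos r (hr : r ∈ Set.Ioo 0 (√((2 + √3) / 2) * ρ₀)) := radicand_pos hr.1 hr.2
  have hderiv r (hr : r ∈ Set.Ioo 0 (√((2 + √3) / 2) * ρ₀)) :
      deriv (fun r => 1 / 2 * √(ρ₀ ^ 4 - (r ^ 2 - √3 / 2 * ρ₀ ^ 2) ^ 2)) =ᶠ[nhds r]
        fun x => -(x * (x ^ 2 - √3 / 2 * ρ₀ ^ 2)) / √(ρ₀ ^ 4 - (x ^ 2 - √3 / 2 * ρ₀ ^ 2) ^ 2) := by
    filter_upwards [isOpen_Ioo.mem_nhds hr] with x hx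
    exact (hasDerivAt_half_sqrt_radicand (hpos x hx)).deriv
  have hs : 4 * (√3 / 2 * ρ₀ ^ 2) ^ 2 = 3 * ρ₀ ^ 4 := by
    linear_combination ρ₀ ^ 4 * Real.sq_sqrt (show (0 : ℝ) ≤ 3 by norm_num)
  have hu0 : 1 / 2 * √(ρ₀ ^ 4 - ((0 : ℝ) ^ 2 - √3 / 2 * ρ₀ ^ 2) ^ 2) = 1 / 4 * ρ₀ ^ 2 := by
    rw [show ρ₀ ^ 4 - ((0 : ℝ) ^ 2 - √3 / 2 * ρ₀ ^ 2) ^ 2 = (ρ₀ ^ 2 / 2) ^ 2 by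
      linear_combination -hs / 4, Real.sqrt_sq (by positivity)]
    ring
  refine ⟨fun r hr => hasDerivAt_half_sqrt_radicand (hpos r hr), fun r hr => ?_, fun r hr => ?_,
    ?_, fun r _ => by ring⟩
  · exact (hderiv r hr).differentiableAt_iff.mpr
      (hasDerivAt_neg_mul_div_sqrt_radicand (hpos r hr)).differentiableAt
  · rw [(hderiv r hr).deriv_eq, (hasDerivAt_neg_mul_div_sqrt_radicand (hpos r hr)).deriv,
      (hderiv r hr).eq_of_nhds]
    exact vanishingE1_half_sqrt_radicand (hpos r hr) hs
  · exact tendsto_nhdsWithin_of_tendsto_nhds (Continuous.tendsto' (by fun_prop) _ _ hu0)
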